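/- Let 𝒜 be an admissible Banach A-valued function algebra on X, 𝔄 = 𝒜 ∩ C(X), φ a character of A and 𝖬 a maximal ideal of 𝔄. Then ℳ = {f ∈ 𝒜 : φ∘f ∈ 𝖬} is a maximal ideal of 𝒜; indeed, if ψ ∈ Δ(𝔄) with 𝖬 = ker ψ, then ψ ⋄ φ : f ↦ ψ(φ∘f) is a character of 𝒜 whose kernel equals ℳ. -/
import Mathlib


open WeakDual

variable {X : Type*} [TopologicalSpace X] [CompactSpace X] [T2Space X] [Nonempty X]
variable {A : Type*} [NormedCommRing A] [NormedAlgebra ℂ A] [CompleteSpace A] [Nontrivial A]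
variable {B : Type*} [NormedCommRing B] [NormedAlgebra ℂ B] [CompleteSpace B]

/-- The embedding of scalar-valued continuous functions into `A`-valued ones,
`g ↦ g·𝟏`. -/
noncomputable def scalHom (X A : Type*) [TopologicalSpace X] [NormedCommRing A]
    [NormedAlgebra ℂ A] : C(X, ℂ) →ₐ[ℂ] C(X, A) :=
  AlgHom.compLeftContinuous ℂ (Algebra.ofId ℂ A) (continuous_algebraMap ℂ A)

/-- The scalar subalgebra `𝔄 = 𝒜 ∩ C(X)`, realized inside `C(X, ℂ)`: those scalar
functions `g` with `g·𝟏 ∈ 𝒜`. -/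
noncomputable def scalarSub (ι : B →ₐ[ℂ] C(X, A)) : Subalgebra ℂ C(X, ℂ) :=
  Subalgebra.comap (scalHom X A) (AlgHom.range ι)

/-- For a character φ of A and a maximal ideal N = ker ψ of 𝔄 = 𝒜 ∩ C(X), the
functional ψ ⋄ φ : f ↦ ψ(φ∘f) is a character of 𝒜 whose kernel
ℳ = {f ∈ 𝒜 : φ∘f ∈ N} is a maximal ideal of 𝒜. -/
theorem stmt10
(ι : B →ₐ[ℂ] C(X, A)) (hinj : Function.Injective ι)
    (κ : A →ₐ[ℂ] B) (hκ : ∀ a : A, ι (κ a) = ContinuousMap.const X a)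
    (hκnorm : ∃ c₁ > (0:ℝ), ∃ c₂ > (0:ℝ), ∀ a : A, c₁ * ‖a‖ ≤ ‖κ a‖ ∧ ‖κ a‖ ≤ c₂ * ‖a‖)
    (hdom : ∀ f : B, ‖ι f‖ ≤ ‖f‖)
    (hsep : ∀ x y : X, x ≠ y → ∀ M : Ideal A, M.IsMaximal → ∃ f : B, ι f x - ι f y ∉ M)
    (hss : Ideal.jacobson (⊥ : Ideal A) = ⊥)
    (hadm : ∀ (f : B) (φ : A →ₐ[ℂ] ℂ), ∃ g : B, ∀ x : X, ι g x = algebraMap ℂ A (φ (ι f x)))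
    (φ : A →ₐ[ℂ] ℂ) (N : Ideal ↥(scalarSub ι)) (hN : N.IsMaximal)
    (ψ : ↥(scalarSub ι) →ₐ[ℂ] ℂ) (hψ : ∀ g₀ : ↥(scalarSub ι), ψ g₀ = 0 ↔ g₀ ∈ N) :
    ∃ τ : B →ₐ[ℂ] ℂ,
      (∀ (f : B) (g₀ : ↥(scalarSub ι)),
        (∀ x : X, (g₀ : C(X, ℂ)) x = φ (ι f x)) → τ f = ψ g₀) ∧
      (∀ f : B, τ f = 0 ↔ ∃ g₀ : ↥(scalarSub ι), g₀ ∈ N ∧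
        ∀ x : X, (g₀ : C(X, ℂ)) x = φ (ι f x)) ∧
      (RingHom.ker τ).IsMaximal := by
  have hφc : Continuous φ := map_continuous φ
  have hscal : ∀ (g : C(X, ℂ)) (x : X), scalHom X A g x = algebraMap ℂ A (g x) :=
    fun g x => rfl
  have hmem : ∀ f : B, ((⟨φ, hφc⟩ : C(A, ℂ)).comp (ι f)) ∈ scalarSub ι := by
    intro f
    rw [scalarSub, Subalgebra.mem_comap]
    obtain ⟨g, hg⟩ := hadm f φ
    exact ⟨g, ContinuousMap.ext fun x => hg x⟩
  let Φ : B →ₐ[ℂ] ↥(scalarSub ι) :=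
  { toFun := fun f => ⟨(⟨φ, hφc⟩ : C(A, ℂ)).comp (ι f), hmem f⟩
    map_one' := Subtype.ext (ContinuousMap.ext fun x => by simp)
    map_mul' := fun f g => Subtype.ext (ContinuousMap.ext fun x => by simp)
    map_zero' := Subtype.ext (ContinuousMap.ext fun x => by simp)
    map_add' := fun f g => Subtype.ext (ContinuousMap.ext fun x => by simp)
    commutes' := fun z => Subtype.ext (ContinuousMap.ext fun x => by
      simp [Algebra.algebraMap_eq_smul_one]) }
  have hΦ : ∀ (f : B) (x : X), ((Φ f : ↥(scalarSub ι)) : C(X, ℂ)) x = φ (ι f x) :=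
    fun f x => rfl
  have hΦeq : ∀ (f : B) (g₀ : ↥(scalarSub ι)),
      (∀ x : X, (g₀ : C(X, ℂ)) x = φ (ι f x)) → Φ f = g₀ := fun f g₀ h =>
    Subtype.ext (ContinuousMap.ext fun x => (h x).symm)
  refine ⟨ψ.comp Φ, fun f g₀ h => by rw [AlgHom.comp_apply, hΦeq f g₀ h], fun f => ?_, ?_⟩
  · constructor
    · intro h0
      exact ⟨Φ f, (hψ (Φ f)).mp h0, hΦ f⟩
    · rintro ⟨g₀, hg₀N, hg₀⟩
      rw [AlgHom.comp_apply, hΦeq f g₀ hg₀]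
      exact (hψ g₀).mpr hg₀N
  · have hsurj : Function.Surjective (ψ.comp Φ) := fun z =>
      ⟨algebraMap ℂ B z, (ψ.comp Φ).commutes z⟩
    exact RingHom.ker_isMaximal_of_surjective _ hsurj
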